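/- arXiv:2404.10802 — 6 statements merged into one kernel-verified Lean document; each statement's English description precedes it below -/
import Mathlib

section
/- Let A be the adjacency matrix of a simple undirected graph on n vertices (A_{ij} ∈ {0,1}, A_{ii} = 0, A symmetric), with degrees kⱼ = ∑ᵢ A_{ij}. Define o_{ij} = ∑_{l=1}^n A_{il} A_{jl}. Then ∑_{1≤i,j≤n} o_{ij}² ≤ (max_{1≤j≤n} kⱼ) · ∑_{i=1}^n kᵢ². -/
/-- For the adjacency matrix of a simple graph, with `o_{ij} = ∑_l A_{il} A_{jl}`,
one has `∑_{i,j} o_{ij}² ≤ (max_j k_j) ∑_i k_i²`. -/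
theorem stmt3
    {n : ℕ} (hn : 0 < n) (A : Fin n → Fin n → ℝ)
    (hA01 : ∀ i j, A i j = 0 ∨ A i j = 1)
    (hAdiag : ∀ i, A i i = 0)
    (hAsymm : ∀ i j, A i j = A j i)
    (k : Fin n → ℝ) (hk : ∀ j, k j = ∑ i, A i j)
    (o : Fin n → Fin n → ℝ) (ho : ∀ i j, o i j = ∑ l, A i l * A j l) :
    ∑ i, ∑ j, (o i j) ^ 2 ≤
      (Finset.univ.sup' ⟨⟨0, hn⟩, Finset.mem_univ _⟩ k) * ∑ i, (k i) ^ 2 := by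
  set K := Finset.univ.sup' ⟨⟨0, hn⟩, Finset.mem_univ _⟩ k with hK
  have hA0 : ∀ i j, 0 ≤ A i j := by
    intro i j; rcases hA01 i j with h | h <;> simp [h]
  have hA1 : ∀ i j, A i j ≤ 1 := by
    intro i j; rcases hA01 i j with h | h <;> simp [h]
  have ho0 : ∀ i j, 0 ≤ o i j := by
    intro i j; rw [ho]
    exact Finset.sum_nonneg fun l _ => mul_nonneg (hA0 i l) (hA0 j l)
  have hoK : ∀ i j, o i j ≤ K := by
    intro i j
    have h1 : o i j ≤ k i := by
      rw [ho, hk]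
      calc ∑ l, A i l * A j l ≤ ∑ l, A i l :=
            Finset.sum_le_sum fun l _ => by
              nlinarith [hA0 i l, hA1 j l, hA0 j l]
        _ = ∑ l, A l i := Finset.sum_congr rfl fun l _ => hAsymm i l
    exact h1.trans (Finset.le_sup' k (Finset.mem_univ i))
  have hsum : ∑ i, ∑ j, o i j = ∑ l, (k l) ^ 2 := by
    have : ∀ l : Fin n, ∑ i, A i l = k l := fun l => (hk l).symm
    calc ∑ i, ∑ j, o i j = ∑ i, ∑ j, ∑ l, A i l * A j l := by
          simp only [ho]
      _ = ∑ i, ∑ l, A i l * ∑ j, A j l := by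
          refine Finset.sum_congr rfl fun i _ => ?_
          rw [Finset.sum_comm]
          exact Finset.sum_congr rfl fun l _ => (Finset.mul_sum _ _ _).symm
      _ = ∑ l, (∑ i, A i l) * (∑ j, A j l) := by
          rw [Finset.sum_comm]
          exact Finset.sum_congr rfl fun l _ => (Finset.sum_mul _ _ _).symm
      _ = ∑ l, (k l) ^ 2 := by
          refine Finset.sum_congr rfl fun l _ => ?_
          rw [this l, sq]
  calc ∑ i, ∑ j, (o i j) ^ 2 ≤ ∑ i, ∑ j, K * o i j := by
        refine Finset.sum_le_sum fun i _ => Finset.sum_le_sum fun j _ => ?_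
        rw [sq]
        exact mul_le_mul_of_nonneg_right (hoK i j) (ho0 i j)
    _ = K * ∑ i, ∑ j, o i j := by
        simp [Finset.mul_sum]
    _ = K * ∑ i, (k i) ^ 2 := by rw [hsum]
end

section
/- Let G be a simple undirected graph with m ≥ 1 edges, degrees kᵢ, and B_{ij} = A_{ij} − kᵢkⱼ/(2m). Let 0 < p_{(2)} + p_{(2)}² − 2p_{(3)} and p_{(3)} ≥ p_{(2)}², and define σₙ² = (p_{(2)}+p_{(2)}²−2p_{(3)})/(2m²) · ∑_{i≠j} B_{ij}² + (p_{(3)}−p_{(2)}²)/m² · ∑_i B_{ii}² and δₙ² = (p_{(2)}+p_{(2)}²−2p_{(3)})/m. Then σₙ² ≥ δₙ² (1 − √2 · max_i kᵢ / √m). -/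
/-!
Dropping the diagonal part of `σₙ²` and the squares `(kᵢkⱼ/2m)²`, the off-diagonal sum
`∑_{i≠j} B_{ij}²` is at least `2m − Q/m`, where `Q = ∑_{i,j} A_{ij} kᵢ kⱼ`. Writing
`Q = ∑ᵢ kᵢ (∑ⱼ A_{ij} kⱼ)` and applying Cauchy–Schwarz to the outer sum and to every row gives
`Q ≤ √(2m) ∑ᵢ kᵢ² ≤ √(2m) · 2m · maxᵢ kᵢ`.
-/

open Finset

section DegreeSums

variable {ι : Type*} [Fintype ι]

lemma sum_sq_le_mul_sum_of_le {k : ι → ℝ} {K : ℝ} (hk : ∀ i, 0 ≤ k i) (hK : ∀ i, k i ≤ K) :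
    ∑ i, k i ^ 2 ≤ K * ∑ i, k i := by
  rw [mul_sum]
  exact sum_le_sum fun i _ => by nlinarith [hk i, hK i]

lemma sub_two_mul_mul_le_sq_sub {a : ℝ} (ha : a = 0 ∨ a = 1) (x : ℝ) :
    a - 2 * a * x ≤ (a - x) ^ 2 := by
  rcases ha with rfl | rfl <;> nlinarith [sq_nonneg x]

lemma sq_sum_mul_le_of_zero_or_one {a : ι → ℝ} (ha : ∀ j, a j = 0 ∨ a j = 1) (x : ι → ℝ) :
    (∑ j, a j * x j) ^ 2 ≤ (∑ j, a j) * ∑ j, x j ^ 2 := by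
  have ha_sq : ∀ j, a j ^ 2 = a j := fun j => by rcases ha j with h | h <;> simp [h]
  simpa only [ha_sq] using sum_mul_sq_le_sq_mul_sq univ a x

variable {A : ι → ι → ℝ} (hA : ∀ i j, A i j = 0 ∨ A i j = 1)
  {k : ι → ℝ} (hk : ∀ i, k i = ∑ j, A i j)
include hA hk

lemma sq_sum_adj_mul_deg_le :
    (∑ i, ∑ j, A i j * (k i * k j)) ^ 2 ≤ (∑ i, k i) * (∑ i, k i ^ 2) ^ 2 := by
  have hQ : ∑ i, ∑ j, A i j * (k i * k j) = ∑ i, k i * ∑ j, A i j * k j := by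
    refine sum_congr rfl fun i _ => ?_
    rw [mul_sum]
    exact sum_congr rfl fun j _ => by ring
  have hrows : ∑ i, (∑ j, A i j * k j) ^ 2 ≤ (∑ i, k i) * ∑ i, k i ^ 2 := by
    rw [sum_mul]
    refine sum_le_sum fun i _ => ?_
    simpa only [← hk] using sq_sum_mul_le_of_zero_or_one (hA i) k
  calc (∑ i, ∑ j, A i j * (k i * k j)) ^ 2
      ≤ (∑ i, k i ^ 2) * ∑ i, (∑ j, A i j * k j) ^ 2 := by
        rw [hQ]; exact sum_mul_sq_le_sq_mul_sq univ k _
    _ ≤ (∑ i, k i ^ 2) * ((∑ i, k i) * ∑ i, k i ^ 2) :=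
        mul_le_mul_of_nonneg_left hrows (sum_nonneg fun i _ => sq_nonneg _)
    _ = (∑ i, k i) * (∑ i, k i ^ 2) ^ 2 := by ring

lemma sum_adj_mul_deg_le_sqrt_mul :
    ∑ i, ∑ j, A i j * (k i * k j) ≤ √(∑ i, k i) * ∑ i, k i ^ 2 := by
  have hsq_nonneg : 0 ≤ ∑ i, k i ^ 2 := sum_nonneg fun i _ => sq_nonneg _
  calc ∑ i, ∑ j, A i j * (k i * k j) ≤ |∑ i, ∑ j, A i j * (k i * k j)| := le_abs_self _
    _ ≤ √((∑ i, k i) * (∑ i, k i ^ 2) ^ 2) := Real.abs_le_sqrt (sq_sum_adj_mul_deg_le hA hk)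
    _ = √(∑ i, k i) * ∑ i, k i ^ 2 := by
        rw [Real.sqrt_mul' _ (sq_nonneg _), Real.sqrt_sq hsq_nonneg]

lemma two_mul_sub_div_le_sum_offDiag_sq [DecidableEq ι] (hdiag : ∀ i, A i i = 0) {m : ℝ} (hm : m ≠ 0)
    (h2m : ∑ i, k i = 2 * m) :
    2 * m - (∑ i, ∑ j, A i j * (k i * k j)) / m ≤
      ∑ i, ∑ j, if i ≠ j then (A i j - k i * k j / (2 * m)) ^ 2 else 0 := by
  have hlhs : 2 * m - (∑ i, ∑ j, A i j * (k i * k j)) / m =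
      ∑ i, ∑ j, (A i j - 2 * A i j * (k i * k j / (2 * m))) := by
    simp only [sum_sub_distrib, ← hk, h2m, sum_div]
    congr 1
    exact sum_congr rfl fun i _ => sum_congr rfl fun j _ => by field_simp
  rw [hlhs]
  refine sum_le_sum fun i _ => sum_le_sum fun j _ => ?_
  by_cases hij : i = j
  · subst hij; simp [hdiag]
  · simpa [hij] using sub_two_mul_mul_le_sq_sub (hA i j) (k i * k j / (2 * m))

end DegreeSums

theorem stmt9_general
    {n : ℕ} (hn : 0 < n) (A : Fin n → Fin n → ℝ)
    (hA01 : ∀ i j, i ≠ j → A i j = 0 ∨ A i j = 1)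
    (hAdiag : ∀ i, A i i = 0)
    (k : Fin n → ℝ) (hk : ∀ i, k i = ∑ j, A i j)
    (m : ℝ) (hm : 1 ≤ m) (h2m : ∑ i, k i = 2 * m)
    (B : Fin n → Fin n → ℝ)
    (hB : ∀ i j, B i j = A i j - k i * k j / (2 * m))
    (p2 p3 : ℝ) (hpos : 0 < p2 + p2 ^ 2 - 2 * p3) (hp32 : p2 ^ 2 ≤ p3)
    (σn2 δn2 : ℝ)
    (hσ : σn2 = (p2 + p2 ^ 2 - 2 * p3) / (2 * m ^ 2) *
        (∑ i, ∑ j, if i ≠ j then (B i j) ^ 2 else 0) +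
        (p3 - p2 ^ 2) / m ^ 2 * ∑ i, (B i i) ^ 2)
    (hδ : δn2 = (p2 + p2 ^ 2 - 2 * p3) / m) :
    σn2 ≥ δn2 * (1 - Real.sqrt 2 *
      (Finset.univ.sup' ⟨⟨0, hn⟩, Finset.mem_univ _⟩ k) / Real.sqrt m) := by
  set K := univ.sup' ⟨⟨0, hn⟩, mem_univ _⟩ k
  set c := p2 + p2 ^ 2 - 2 * p3
  have hm0 : 0 < m := by linarith
  have hA : ∀ i j, A i j = 0 ∨ A i j = 1 := fun i j =>
    if h : i = j then .inl (h ▸ hAdiag i) else hA01 i j h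
  have hk0 : ∀ i, 0 ≤ k i := fun i =>
    (hk i).symm ▸ sum_nonneg fun j _ => by rcases hA i j with h | h <;> simp [h]
  have hQ : ∑ i, ∑ j, A i j * (k i * k j) ≤ √(2 * m) * (2 * m * K) := by
    calc ∑ i, ∑ j, A i j * (k i * k j) ≤ √(∑ i, k i) * ∑ i, k i ^ 2 :=
          sum_adj_mul_deg_le_sqrt_mul hA hk
      _ ≤ √(∑ i, k i) * (K * ∑ i, k i) := by
          gcongr
          exact sum_sq_le_mul_sum_of_le hk0 fun i => le_sup' k (mem_univ i)
      _ = √(2 * m) * (2 * m * K) := by rw [h2m]; ring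
  have hoff := two_mul_sub_div_le_sum_offDiag_sq hA hk hAdiag hm0.ne' h2m
  simp only [← hB] at hoff
  have hdiag : 0 ≤ (p3 - p2 ^ 2) / m ^ 2 * ∑ i, B i i ^ 2 :=
    mul_nonneg (div_nonneg (by linarith) (by positivity)) (sum_nonneg fun i _ => sq_nonneg _)
  have hsqrt : √(2 * m) = √2 * √m := Real.sqrt_mul (by norm_num) m
  have hsm : √m ^ 2 = m := Real.sq_sqrt hm0.le
  calc δn2 * (1 - √2 * K / √m) = c / m - c / (2 * m ^ 2) * (√(2 * m) * (2 * m * K) / m) := by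
        rw [hδ, hsqrt]; field_simp; linear_combination (√2 * K) * hsm
    _ ≤ c / m - c / (2 * m ^ 2) * ((∑ i, ∑ j, A i j * (k i * k j)) / m) := by
        gcongr
    _ = c / (2 * m ^ 2) * (2 * m - (∑ i, ∑ j, A i j * (k i * k j)) / m) := by
        field_simp
    _ ≤ σn2 := by
        rw [hσ]
        linarith [mul_le_mul_of_nonneg_left hoff (by positivity : 0 ≤ c / (2 * m ^ 2))]

/-- Lower bound for the variance normalization:
`σₙ² ≥ δₙ² (1 − √2 · max_i k_i / √m)`. -/
theorem stmt9
    {n : ℕ} (hn : 0 < n) (A : Fin n → Fin n → ℝ)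
    (hA01 : ∀ i j, i ≠ j → A i j = 0 ∨ A i j = 1)
    (hAdiag : ∀ i, A i i = 0)
    (hAsymm : ∀ i j, A i j = A j i)
    (k : Fin n → ℝ) (hk : ∀ i, k i = ∑ j, A i j)
    (m : ℝ) (hm : 1 ≤ m) (h2m : ∑ i, k i = 2 * m)
    (B : Fin n → Fin n → ℝ)
    (hB : ∀ i j, B i j = A i j - k i * k j / (2 * m))
    (p2 p3 : ℝ) (hpos : 0 < p2 + p2 ^ 2 - 2 * p3) (hp32 : p2 ^ 2 ≤ p3)
    (σn2 δn2 : ℝ)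
    (hσ : σn2 = (p2 + p2 ^ 2 - 2 * p3) / (2 * m ^ 2) *
        (∑ i, ∑ j, if i ≠ j then (B i j) ^ 2 else 0) +
        (p3 - p2 ^ 2) / m ^ 2 * ∑ i, (B i i) ^ 2)
    (hδ : δn2 = (p2 + p2 ^ 2 - 2 * p3) / m) :
    σn2 ≥ δn2 * (1 - Real.sqrt 2 *
      (Finset.univ.sup' ⟨⟨0, hn⟩, Finset.mem_univ _⟩ k) / Real.sqrt m) :=
  stmt9_general hn A hA01 hAdiag k hk m hm h2m B hB p2 p3 hpos hp32 σn2 δn2 hσ hδ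
end

section
/- For all x ≥ 0, the standard normal tail satisfies (1/(√(2π)(1+x))) e^{−x²/2} ≤ 1 − Φ(x) ≤ (1/(√π(1+x))) e^{−x²/2}, where Φ is the standard normal CDF. -/
open MeasureTheory

/-- The standard normal cumulative distribution function. -/
noncomputable def stdNormalCDF (x : ℝ) : ℝ :=
  ∫ t in Set.Iic x, Real.exp (-t ^ 2 / 2) / Real.sqrt (2 * Real.pi)

/-!
The function `t ↦ -e^{-t²/2}/(1+t)` vanishes at `+∞` and has derivative
`e^{-t²/2} · (t²+t+1)/(1+t)²`, so `e^{-x²/2}/(1+x)` is the integral over `(x, ∞)` of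
`e^{-t²/2}` against a weight lying in `[3/4, 1]` for `t ≥ 0`. Hence the Gaussian tail is
squeezed between `e^{-x²/2}/(1+x)` and `4/3` times it, and `4/3 ≤ √2`.
-/

open Real Set Filter Topology

lemma integrable_exp_neg_sq_div_two : Integrable fun t : ℝ => exp (-t ^ 2 / 2) := by
  simpa [neg_div, div_eq_inv_mul] using integrable_exp_neg_mul_sq (by norm_num : (0 : ℝ) < 1 / 2)

lemma integral_exp_neg_sq_div_two : ∫ t : ℝ, exp (-t ^ 2 / 2) = √(2 * π) := by
  simpa [neg_div, div_eq_inv_mul] using integral_gaussian (1 / 2)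

lemma one_sub_stdNormalCDF (x : ℝ) :
    1 - stdNormalCDF x = (∫ t in Ioi x, exp (-t ^ 2 / 2)) / √(2 * π) := by
  have hpos : 0 < √(2 * π) := by positivity
  have hsplit := intervalIntegral.integral_Iic_add_Ioi (b := x)
    integrable_exp_neg_sq_div_two.integrableOn integrable_exp_neg_sq_div_two.integrableOn
  rw [integral_exp_neg_sq_div_two] at hsplit
  rw [stdNormalCDF, integral_div, eq_div_iff hpos.ne', sub_mul, div_mul_cancel₀ _ hpos.ne']
  linarith

lemma hasDerivAt_neg_exp_neg_sq_div_two_div {t : ℝ} (ht : 1 + t ≠ 0) :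
    HasDerivAt (fun s => -(exp (-s ^ 2 / 2) / (1 + s)))
      (exp (-t ^ 2 / 2) * ((t ^ 2 + t + 1) / (1 + t) ^ 2)) t := by
  have hquad : HasDerivAt (fun s : ℝ => -s ^ 2 / 2) (-t) t :=
    ((hasDerivAt_pow 2 t).neg.div_const 2).congr_deriv (by ring_nf)
  refine (hquad.exp.div ((hasDerivAt_id' t).const_add 1) ht).neg.congr_deriv ?_
  field_simp
  ring

lemma tendsto_exp_neg_sq_div_two_div_atTop :
    Tendsto (fun s => exp (-s ^ 2 / 2) / (1 + s)) atTop (𝓝 0) := by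
  have hinv : Tendsto (fun s : ℝ => 1 / (1 + s)) atTop (𝓝 0) :=
    tendsto_const_nhds.div_atTop (tendsto_atTop_add_const_left _ 1 tendsto_id)
  refine squeeze_zero' ?_ ?_ hinv
  · filter_upwards [eventually_ge_atTop 0] with s hs
    positivity
  · filter_upwards [eventually_ge_atTop 0] with s hs
    gcongr
    exact exp_le_one_iff.2 (by nlinarith)

lemma sq_add_add_one_div_sq_nonneg (t : ℝ) : 0 ≤ (t ^ 2 + t + 1) / (1 + t) ^ 2 := by
  have : 0 ≤ t ^ 2 + t + 1 := by nlinarith [sq_nonneg (t + 1 / 2)]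
  positivity

lemma three_div_four_le_sq_add_add_one_div_sq {t : ℝ} (ht : 1 + t ≠ 0) :
    3 / 4 ≤ (t ^ 2 + t + 1) / (1 + t) ^ 2 := by
  rw [le_div_iff₀ (by positivity)]
  nlinarith [sq_nonneg (t - 1)]

lemma sq_add_add_one_div_sq_le_one {t : ℝ} (ht : 0 ≤ t) :
    (t ^ 2 + t + 1) / (1 + t) ^ 2 ≤ 1 := by
  rw [div_le_one (by positivity)]
  nlinarith

lemma integrableOn_Ioi_exp_neg_sq_div_two_mul {x : ℝ} (hx : -1 < x) :
    IntegrableOn (fun t => exp (-t ^ 2 / 2) * ((t ^ 2 + t + 1) / (1 + t) ^ 2)) (Ioi x) :=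
  integrableOn_Ioi_deriv_of_nonneg'
    (fun _ ht => hasDerivAt_neg_exp_neg_sq_div_two_div (by linarith [ht.out]))
    (fun t _ => mul_nonneg (exp_pos _).le (sq_add_add_one_div_sq_nonneg t))
    tendsto_exp_neg_sq_div_two_div_atTop.neg

lemma integral_Ioi_exp_neg_sq_div_two_mul {x : ℝ} (hx : -1 < x) :
    ∫ t in Ioi x, exp (-t ^ 2 / 2) * ((t ^ 2 + t + 1) / (1 + t) ^ 2) =
      exp (-x ^ 2 / 2) / (1 + x) := by
  have h := integral_Ioi_of_hasDerivAt_of_tendsto'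
    (fun _ ht => hasDerivAt_neg_exp_neg_sq_div_two_div (by linarith [ht.out]))
    (integrableOn_Ioi_exp_neg_sq_div_two_mul hx) tendsto_exp_neg_sq_div_two_div_atTop.neg
  simpa using h

lemma div_one_add_le_integral_Ioi_exp_neg_sq_div_two {x : ℝ} (hx : 0 ≤ x) :
    exp (-x ^ 2 / 2) / (1 + x) ≤ ∫ t in Ioi x, exp (-t ^ 2 / 2) := by
  rw [← integral_Ioi_exp_neg_sq_div_two_mul (by linarith)]
  refine setIntegral_mono_on (integrableOn_Ioi_exp_neg_sq_div_two_mul (by linarith))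
    integrable_exp_neg_sq_div_two.integrableOn measurableSet_Ioi fun t ht => ?_
  exact mul_le_of_le_one_right (exp_pos _).le
    (sq_add_add_one_div_sq_le_one (hx.trans ht.out.le))

lemma integral_Ioi_exp_neg_sq_div_two_le {x : ℝ} (hx : -1 < x) :
    ∫ t in Ioi x, exp (-t ^ 2 / 2) ≤ 4 / 3 * (exp (-x ^ 2 / 2) / (1 + x)) := by
  rw [← integral_Ioi_exp_neg_sq_div_two_mul hx, ← integral_const_mul]
  refine setIntegral_mono_on integrable_exp_neg_sq_div_two.integrableOn
    ((integrableOn_Ioi_exp_neg_sq_div_two_mul hx).const_mul _) measurableSet_Ioi fun t ht => ?_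
  have hw := three_div_four_le_sq_add_add_one_div_sq (t := t) (by linarith [ht.out])
  nlinarith [exp_pos (-t ^ 2 / 2)]

/-- Standard normal tail bounds: for all `x ≥ 0`,
`e^{−x²/2}/(√(2π)(1+x)) ≤ 1 − Φ(x) ≤ e^{−x²/2}/(√π(1+x))`. -/
theorem stmt11 (x : ℝ) (hx : 0 ≤ x) :
    1 / (Real.sqrt (2 * Real.pi) * (1 + x)) * Real.exp (-x ^ 2 / 2) ≤
        1 - stdNormalCDF x ∧
      1 - stdNormalCDF x ≤
        1 / (Real.sqrt Real.pi * (1 + x)) * Real.exp (-x ^ 2 / 2) := by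
  rw [one_sub_stdNormalCDF]
  constructor
  · calc 1 / (√(2 * π) * (1 + x)) * exp (-x ^ 2 / 2)
        = exp (-x ^ 2 / 2) / (1 + x) / √(2 * π) := by field_simp
      _ ≤ _ := by gcongr; exact div_one_add_le_integral_Ioi_exp_neg_sq_div_two hx
  · calc (∫ t in Ioi x, exp (-t ^ 2 / 2)) / √(2 * π)
        ≤ 4 / 3 * (exp (-x ^ 2 / 2) / (1 + x)) / (√2 * √π) := by
          rw [← sqrt_mul zero_le_two π]; gcongr; exact integral_Ioi_exp_neg_sq_div_two_le (by linarith)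
      _ ≤ √2 * (exp (-x ^ 2 / 2) / (1 + x)) / (√2 * √π) := by
          gcongr; exact le_sqrt_of_sq_le (by norm_num)
      _ = 1 / (√π * (1 + x)) * exp (-x ^ 2 / 2) := by
          field_simp
end

section
/- For all x ≥ 0 and all real τ with |τ| ≤ 1/2, there exists θ with |θ| ≤ 1 such that (1 − Φ(x+τ))/(1 − Φ(x)) = exp(θ √(2π) (1+x) |τ|), where Φ is the standard normal CDF. Equivalently, |ln((1−Φ(x+τ))/(1−Φ(x)))| ≤ √(2π)(1+x)|τ|. -/
open MeasureTheory

/-!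
Write `Q = 1 - Φ` and `φ = Φ'`, so that `(log Q)' = -φ / Q` is minus the hazard rate. For
`t ≥ 0` the hazard rate is at most `t + 1`, because `φ(s) / (s + 1)` decays no faster than `φ`;
for `t ≤ 0` it is at most `φ(0) / Q(0) = 2 / √(2π) ≤ 1`. On `(-∞, x + 1/2]` the hazard rate is
therefore at most `x + 3/2 ≤ √(2π) (1 + x)`, and the mean value theorem bounds
`log Q(x + τ) - log Q(x)`.
-/

open Real Set Filter Topology ProbabilityTheory

noncomputable def stdNormalPDF (t : ℝ) : ℝ := exp (-t ^ 2 / 2) / √(2 * π)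

noncomputable def stdNormalTail (x : ℝ) : ℝ := ∫ t in Ioi x, stdNormalPDF t

lemma two_le_sqrt_two_pi : 2 ≤ √(2 * π) :=
  Real.le_sqrt_of_sq_le (by nlinarith [pi_gt_three])

lemma stdNormalPDF_eq_gaussianPDFReal : stdNormalPDF = gaussianPDFReal 0 1 := by
  ext t
  simp [stdNormalPDF, gaussianPDFReal, div_eq_inv_mul]

lemma stdNormalPDF_pos (t : ℝ) : 0 < stdNormalPDF t := by
  rw [stdNormalPDF_eq_gaussianPDFReal]
  exact gaussianPDFReal_pos _ _ _ one_ne_zero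

lemma integrable_stdNormalPDF : Integrable stdNormalPDF := by
  rw [stdNormalPDF_eq_gaussianPDFReal]
  exact integrable_gaussianPDFReal _ _

lemma continuous_stdNormalPDF : Continuous stdNormalPDF := by
  unfold stdNormalPDF
  fun_prop

lemma stdNormalPDF_le (t : ℝ) : stdNormalPDF t ≤ 1 / √(2 * π) := by
  unfold stdNormalPDF
  gcongr
  exact exp_le_one_iff.mpr (by nlinarith [sq_nonneg t])

lemma hasDerivAt_stdNormalPDF (t : ℝ) : HasDerivAt stdNormalPDF (-t * stdNormalPDF t) t := by
  have h : HasDerivAt (fun s : ℝ => -s ^ 2 / 2) (-t) t :=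
    ((hasDerivAt_pow 2 t).neg.div_const 2).congr_deriv (by ring)
  exact (h.exp.div_const (√(2 * π))).congr_deriv (by rw [stdNormalPDF]; ring)

lemma tendsto_stdNormalPDF_atTop : Tendsto stdNormalPDF atTop (𝓝 0) := by
  have h : Tendsto (fun t : ℝ => -t ^ 2 / 2) atTop atBot :=
    (tendsto_neg_atTop_atBot.comp (tendsto_pow_atTop two_ne_zero)).atBot_div_const two_pos
  have := (tendsto_exp_atBot.comp h).div_const (√(2 * π))
  rwa [zero_div] at this

lemma one_sub_stdNormalCDF_s12 (x : ℝ) : 1 - stdNormalCDF x = stdNormalTail x := by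
  have h := intervalIntegral.integral_Iic_add_Ioi (b := x) integrable_stdNormalPDF.integrableOn
    integrable_stdNormalPDF.integrableOn
  rw [stdNormalPDF_eq_gaussianPDFReal, integral_gaussianPDFReal_eq_one _ one_ne_zero] at h
  rw [stdNormalTail, stdNormalCDF, stdNormalPDF_eq_gaussianPDFReal, ← h]
  simp [stdNormalPDF_eq_gaussianPDFReal.symm, stdNormalPDF]

lemma stdNormalTail_pos (x : ℝ) : 0 < stdNormalTail x := by
  rw [stdNormalTail, setIntegral_pos_iff_support_of_nonneg_ae
    (.of_forall fun t => (stdNormalPDF_pos t).le) integrable_stdNormalPDF.integrableOn]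
  simp [Function.support, (stdNormalPDF_pos _).ne']

lemma stdNormalTail_antitone : Antitone stdNormalTail := fun _ _ hab =>
  setIntegral_mono_set integrable_stdNormalPDF.integrableOn
    (.of_forall fun t => (stdNormalPDF_pos t).le) (Ioi_subset_Ioi hab).eventuallyLE

lemma stdNormalTail_zero : stdNormalTail 0 = 1 / 2 := by
  have h := integral_gaussian_Ioi (1 / 2)
  simp only [stdNormalTail, stdNormalPDF, integral_div]
  rw [show π / (1 / 2) = 2 * π by ring] at h
  simp_rw [show ∀ t : ℝ, -t ^ 2 / 2 = -(1 / 2) * t ^ 2 by intro t; ring]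
  rw [h]
  field_simp

lemma hasDerivAt_stdNormalTail (t : ℝ) : HasDerivAt stdNormalTail (-stdNormalPDF t) t := by
  have key : stdNormalTail = fun y => stdNormalTail 0 - ∫ s in (0 : ℝ)..y, stdNormalPDF s := by
    funext y
    have h₁ := intervalIntegral.integral_Iic_add_Ioi (b := y) integrable_stdNormalPDF.integrableOn
      integrable_stdNormalPDF.integrableOn
    have h₂ := intervalIntegral.integral_Iic_add_Ioi (b := 0) integrable_stdNormalPDF.integrableOn
      integrable_stdNormalPDF.integrableOn
    have h₃ := intervalIntegral.integral_Iic_sub_Iic (a := 0) (b := y)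
      integrable_stdNormalPDF.integrableOn integrable_stdNormalPDF.integrableOn
    simp only [stdNormalTail]
    linarith
  rw [key]
  exact (intervalIntegral.integral_hasDerivAt_right integrable_stdNormalPDF.intervalIntegrable
    (continuous_stdNormalPDF.stronglyMeasurableAtFilter _ _)
    continuous_stdNormalPDF.continuousAt).const_sub _

/-- `φ(s) / (s + 1)` tends to `0` and its derivative is at least `-φ(s)` on `[0, ∞)`, so
`φ(t) / (t + 1) ≤ ∫_t^∞ φ`. -/
lemma stdNormalPDF_le_add_one_mul_tail {t : ℝ} (ht : 0 ≤ t) :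
    stdNormalPDF t ≤ (t + 1) * stdNormalTail t := by
  set g' : ℝ → ℝ := fun s => -(s / (s + 1) + 1 / (s + 1) ^ 2) * stdNormalPDF s
  have hderiv : ∀ s ∈ Ici t, HasDerivAt (fun s => stdNormalPDF s / (s + 1)) (g' s) s := by
    intro s hs
    have hs1 : s + 1 ≠ 0 := by linarith [mem_Ici.mp hs]
    refine ((hasDerivAt_stdNormalPDF s).div ((hasDerivAt_id s).add_const 1) hs1).congr_deriv ?_
    simp only [g', id]
    field_simp
    ring
  have hg'_nonpos : ∀ s ∈ Ioi t, g' s ≤ 0 := fun s hs => by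
    have : 0 ≤ s := ht.trans (le_of_lt hs)
    have := stdNormalPDF_pos s
    simp only [g']
    nlinarith [show 0 ≤ s / (s + 1) + 1 / (s + 1) ^ 2 by positivity]
  have hlim : Tendsto (fun s => stdNormalPDF s / (s + 1)) atTop (𝓝 0) := by
    simpa using tendsto_stdNormalPDF_atTop.div_atTop (tendsto_atTop_add_const_right _ 1 tendsto_id)
  have hFTC := integral_Ioi_of_hasDerivAt_of_nonpos' hderiv hg'_nonpos hlim
  have hle : ∫ s in Ioi t, -g' s ≤ stdNormalTail t := by
    refine setIntegral_mono_on (integrableOn_Ioi_deriv_of_nonpos' hderiv hg'_nonpos hlim).neg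
      integrable_stdNormalPDF.integrableOn measurableSet_Ioi fun s hs => ?_
    have hs0 : 0 ≤ s := ht.trans (le_of_lt hs)
    have hcoef : s / (s + 1) + 1 / (s + 1) ^ 2 ≤ 1 := by
      rw [div_add_div _ _ (by positivity) (by positivity), div_le_one (by positivity)]
      nlinarith
    simpa only [g', neg_mul, neg_neg] using mul_le_of_le_one_left (stdNormalPDF_pos s).le hcoef
  rw [integral_neg, hFTC, zero_sub, neg_neg, div_le_iff₀ (by linarith)] at hle
  linarith

lemma stdNormalPDF_le_mul_tail (t : ℝ) : stdNormalPDF t ≤ (max t 0 + 1) * stdNormalTail t := by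
  rcases le_total 0 t with ht | ht
  · rw [max_eq_left ht]
    exact stdNormalPDF_le_add_one_mul_tail ht
  · have hhalf : 1 / 2 ≤ stdNormalTail t := stdNormalTail_zero ▸ stdNormalTail_antitone ht
    calc stdNormalPDF t ≤ 1 / √(2 * π) := stdNormalPDF_le t
      _ ≤ 1 / 2 := by gcongr; exact two_le_sqrt_two_pi
      _ ≤ (max t 0 + 1) * stdNormalTail t := by rw [max_eq_right ht]; linarith

lemma abs_log_stdNormalTail_sub_le {a b c : ℝ} (ha : a ≤ c) (hb : b ≤ c) :
    |log (stdNormalTail b) - log (stdNormalTail a)| ≤ (max c 0 + 1) * |b - a| := by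
  have hderiv : ∀ t ∈ Iic c, HasDerivWithinAt (fun u => log (stdNormalTail u))
      (-stdNormalPDF t / stdNormalTail t) (Iic c) t := fun t _ =>
    ((hasDerivAt_stdNormalTail t).log (stdNormalTail_pos t).ne').hasDerivWithinAt
  have hbound : ∀ t ∈ Iic c, ‖-stdNormalPDF t / stdNormalTail t‖ ≤ max c 0 + 1 := by
    intro t ht
    have hQ := stdNormalTail_pos t
    rw [norm_div, norm_neg, Real.norm_of_nonneg (stdNormalPDF_pos t).le, Real.norm_of_nonneg hQ.le,
      div_le_iff₀ hQ]
    calc stdNormalPDF t ≤ (max t 0 + 1) * stdNormalTail t := stdNormalPDF_le_mul_tail t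
      _ ≤ (max c 0 + 1) * stdNormalTail t := by gcongr; exact ht
  simpa only [Real.norm_eq_abs] using
    (convex_Iic c).norm_image_sub_le_of_norm_hasDerivWithin_le hderiv hbound ha hb

lemma exists_abs_le_one_eq_mul {L M : ℝ} (h : |L| ≤ M) : ∃ θ : ℝ, |θ| ≤ 1 ∧ L = θ * M := by
  rcases (abs_nonneg L |>.trans h).eq_or_lt with hM | hM
  · exact ⟨0, by simp, by simpa [← hM] using h⟩
  · refine ⟨L / M, ?_, (div_mul_cancel₀ L hM.ne').symm⟩
    rwa [abs_div, abs_of_pos hM, div_le_one hM]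

/-- For `x ≥ 0` and `|τ| ≤ 1/2`:
`|ln((1 − Φ(x+τ))/(1 − Φ(x)))| ≤ √(2π)(1+x)|τ|`; equivalently there is `θ`
with `|θ| ≤ 1` such that the ratio equals `exp(θ √(2π)(1+x)|τ|)`. -/
theorem stmt12 (x τ : ℝ) (hx : 0 ≤ x) (hτ : |τ| ≤ 1 / 2) :
    |Real.log ((1 - stdNormalCDF (x + τ)) / (1 - stdNormalCDF x))| ≤
      Real.sqrt (2 * Real.pi) * (1 + x) * |τ| ∧
    ∃ θ : ℝ, |θ| ≤ 1 ∧
      (1 - stdNormalCDF (x + τ)) / (1 - stdNormalCDF x) =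
        Real.exp (θ * Real.sqrt (2 * Real.pi) * (1 + x) * |τ|) := by
  rw [one_sub_stdNormalCDF_s12, one_sub_stdNormalCDF_s12]
  have hQ₁ := stdNormalTail_pos (x + τ)
  have hQ₂ := stdNormalTail_pos x
  have hτ' := abs_le.mp hτ
  have hbound : |log (stdNormalTail (x + τ) / stdNormalTail x)| ≤ √(2 * π) * (1 + x) * |τ| := by
    calc |log (stdNormalTail (x + τ) / stdNormalTail x)|
        ≤ (max (x + 1 / 2) 0 + 1) * |x + τ - x| := by
          rw [log_div hQ₁.ne' hQ₂.ne']
          exact abs_log_stdNormalTail_sub_le (by linarith) (by linarith)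
      _ = (x + 3 / 2) * |τ| := by rw [max_eq_left (by linarith), add_sub_cancel_left]; ring
      _ ≤ √(2 * π) * (1 + x) * |τ| := by
          gcongr
          nlinarith [two_le_sqrt_two_pi]
  obtain ⟨θ, hθ, hlog⟩ := exists_abs_le_one_eq_mul hbound
  refine ⟨hbound, θ, hθ, ?_⟩
  rw [← exp_log (div_pos hQ₁ hQ₂), hlog]
  simp only [mul_assoc]
end

section
/- Let G be a simple undirected graph on n vertices with degrees kᵢ and m edges, and let C = (c₁,…,cₙ) with c₁,…,cₙ i.i.d. on {1,…,K}, P(cᵢ = k) = p_k. Define the modularity Qₙ = (1/2m) ∑_{i,j} (A_{ij} − kᵢkⱼ/(2m)) δ_{cᵢ,cⱼ}. Then E[Qₙ] = −(1−p_{(2)})/(4m²) · ∑_{i=1}^n kᵢ², where p_{(2)} = ∑_k p_k². -/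
open MeasureTheory ProbabilityTheory

/-! Write `B i j = A i j - k i * k j / (2 * m)` for the modularity matrix. In expectation the
indicator `δ(c i, c j)` is `1` on the diagonal and, by independence, the collision probability
`p₍₂₎ = ∑ p_l²` off it, so `E[Q] = (p₍₂₎ ∑_{i,j} B i j + (1 - p₍₂₎) ∑_i B i i) / (2m)`.
Every row of `B` sums to `k i - k i = 0`, and `B i i = -k i² / (2m)` since `A` has zero
diagonal. -/

theorem ite_one_zero_eq_indicator_setOf {Ω : Type*} (P : Ω → Prop) [DecidablePred P] :
    (fun ω => if P ω then (1 : ℝ) else 0) = {ω | P ω}.indicator 1 := by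
  ext ω
  simp [Set.indicator_apply]

section IteOneZero

variable {Ω : Type*} [MeasurableSpace Ω] {μ : Measure Ω} {P : Ω → Prop} [DecidablePred P]

theorem integral_ite_one_zero (hP : MeasurableSet {ω | P ω}) :
    ∫ ω, (if P ω then (1 : ℝ) else 0) ∂μ = μ.real {ω | P ω} := by
  rw [ite_one_zero_eq_indicator_setOf, integral_indicator_one hP]

theorem integrable_ite_one_zero [IsFiniteMeasure μ] (hP : MeasurableSet {ω | P ω}) :
    Integrable (fun ω => if P ω then (1 : ℝ) else 0) μ := by
  rw [ite_one_zero_eq_indicator_setOf]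
  exact (integrable_const 1).indicator hP

end IteOneZero

section Collision

variable {Ω α : Type*} [MeasurableSpace Ω] {μ : Measure Ω} [IsFiniteMeasure μ]
  [Fintype α] [MeasurableSpace α] [MeasurableSingletonClass α] {X Y : Ω → α}

theorem ProbabilityTheory.IndepFun.measureReal_setOf_eq (hXY : IndepFun X Y μ)
    (hX : Measurable X) (hY : Measurable Y) :
    μ.real {ω | X ω = Y ω} = ∑ a, μ.real {ω | X ω = a} * μ.real {ω | Y ω = a} := by
  have hunion : {ω | X ω = Y ω} = ⋃ a, {ω | X ω = a} ∩ {ω | Y ω = a} := by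
    ext ω
    simp [eq_comm]
  have hdisj : Pairwise (Function.onFun Disjoint fun a => {ω | X ω = a} ∩ {ω | Y ω = a}) :=
    fun a b hab => Set.disjoint_left.2 fun ω ha hb => hab (ha.1.symm.trans hb.1)
  rw [hunion,
    measureReal_iUnion_fintype hdisj fun a => (hX (.singleton a)).inter (hY (.singleton a))]
  refine Finset.sum_congr rfl fun a _ => ?_
  simp only [measureReal_def, ← ENNReal.toReal_mul]
  exact congrArg ENNReal.toReal
    (hXY.measure_inter_preimage_eq_mul _ _ (.singleton a) (.singleton a))

theorem ProbabilityTheory.IndepFun.measureReal_setOf_eq_sum_sq (hXY : IndepFun X Y μ)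
    (hX : Measurable X) (hY : Measurable Y) {p : α → ℝ}
    (hXp : ∀ a, μ.real {ω | X ω = a} = p a) (hYp : ∀ a, μ.real {ω | Y ω = a} = p a) :
    μ.real {ω | X ω = Y ω} = ∑ a, p a ^ 2 := by
  simp only [hXY.measureReal_setOf_eq hX hY, hXp, hYp, sq]

end Collision

theorem Finset.sum_sum_mul_ite_eq {ι R : Type*} [Fintype ι] [DecidableEq ι] [CommRing R]
    (B : ι → ι → R) (q : R) :
    ∑ i, ∑ j, B i j * (if i = j then 1 else q) =
      q * ∑ i, ∑ j, B i j + (1 - q) * ∑ i, B i i := by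
  have hsplit : ∀ i j, B i j * (if i = j then 1 else q) =
      q * B i j + if i = j then (1 - q) * B i j else 0 := by
    intro i j
    split_ifs <;> ring
  simp only [hsplit, Finset.sum_add_distrib, Finset.mul_sum, Finset.sum_ite_eq]
  simp

theorem integral_sum_sum_mul_ite_eq_of_iIndepFun {Ω ι α : Type*} [MeasurableSpace Ω]
    {μ : Measure Ω} [IsProbabilityMeasure μ] [Fintype ι] [DecidableEq ι] [Fintype α]
    [DecidableEq α] [MeasurableSpace α] [MeasurableSingletonClass α]
    {c : ι → Ω → α} (hmeas : ∀ i, Measurable (c i)) (hindep : iIndepFun c μ)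
    {p : α → ℝ} (hlaw : ∀ i a, μ.real {ω | c i ω = a} = p a) (B : ι → ι → ℝ) :
    ∫ ω, ∑ i, ∑ j, B i j * (if c i ω = c j ω then 1 else 0) ∂μ
      = ∑ i, ∑ j, B i j * (if i = j then 1 else ∑ a, p a ^ 2) := by
  have hmeasSet : ∀ i j, MeasurableSet {ω | c i ω = c j ω} := fun i j =>
    measurableSet_eq_fun (hmeas i) (hmeas j)
  have hint : ∀ i j, Integrable (fun ω => B i j * if c i ω = c j ω then (1 : ℝ) else 0) μ :=
    fun i j => (integrable_ite_one_zero (hmeasSet i j)).const_mul (B i j)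
  rw [integral_finsetSum _ fun i _ => integrable_finsetSum _ fun j _ => hint i j]
  refine Finset.sum_congr rfl fun i _ => ?_
  rw [integral_finsetSum _ fun j _ => hint i j]
  refine Finset.sum_congr rfl fun j _ => ?_
  rw [integral_const_mul, integral_ite_one_zero (hmeasSet i j)]
  split_ifs with hij
  · simp [hij]
  · rw [(hindep.indepFun hij).measureReal_setOf_eq_sum_sq (hmeas i) (hmeas j)
      (hlaw i) (hlaw j)]

theorem sum_sub_mul_div_eq_zero {ι : Type*} [Fintype ι] (A : ι → ι → ℝ) (k : ι → ℝ)
    (hk : ∀ i, k i = ∑ j, A i j) (m : ℝ) (hm : m ≠ 0) (h2m : ∑ i, k i = 2 * m) (i : ι) :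
    ∑ j, (A i j - k i * k j / (2 * m)) = 0 := by
  rw [Finset.sum_sub_distrib, ← hk, ← Finset.sum_div, ← Finset.mul_sum, h2m]
  field_simp
  ring

theorem stmt13_general
    {Ω : Type*} [MeasurableSpace Ω] {μ : Measure Ω} [IsProbabilityMeasure μ]
    {n K : ℕ} (A : Fin n → Fin n → ℝ)
    (hAdiag : ∀ i, A i i = 0)
    (k : Fin n → ℝ) (hk : ∀ i, k i = ∑ j, A i j)
    (m : ℝ) (hm : 0 < m) (h2m : ∑ i, k i = 2 * m)
    (c : Fin n → Ω → Fin K)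
    (hmeas : ∀ i, Measurable (c i))
    (hindep : iIndepFun c μ)
    (p : Fin K → ℝ)
    (hplaw : ∀ i l, (μ {ω | c i ω = l}).toReal = p l)
    (p2 : ℝ) (hp2 : p2 = ∑ l, (p l) ^ 2)
    (Q : Ω → ℝ)
    (hQ : ∀ ω, Q ω = (1 / (2 * m)) * ∑ i, ∑ j,
        (A i j - k i * k j / (2 * m)) * (if c i ω = c j ω then (1 : ℝ) else 0)) :
    ∫ ω, Q ω ∂μ = -((1 - p2) / (4 * m ^ 2)) * ∑ i, (k i) ^ 2 := by
  simp_rw [hQ]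
  rw [integral_const_mul, integral_sum_sum_mul_ite_eq_of_iIndepFun hmeas hindep hplaw,
    ← hp2, Finset.sum_sum_mul_ite_eq]
  simp_rw [sum_sub_mul_div_eq_zero A k hk m hm.ne' h2m, hAdiag]
  simp only [Finset.sum_const_zero, zero_sub, Finset.sum_neg_distrib, ← Finset.sum_div, ← sq]
  field_simp
  ring

/-- Under free labeling, the expected modularity is
`E[Qₙ] = −(1 − p_{(2)})/(4m²) ∑_i k_i²`. -/
theorem stmt13
    {Ω : Type*} [MeasurableSpace Ω] {μ : Measure Ω} [IsProbabilityMeasure μ]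
    {n K : ℕ} (A : Fin n → Fin n → ℝ)
    (hA01 : ∀ i j, i ≠ j → A i j = 0 ∨ A i j = 1)
    (hAdiag : ∀ i, A i i = 0)
    (hAsymm : ∀ i j, A i j = A j i)
    (k : Fin n → ℝ) (hk : ∀ i, k i = ∑ j, A i j)
    (m : ℝ) (hm : 0 < m) (h2m : ∑ i, k i = 2 * m)
    (c : Fin n → Ω → Fin K)
    (hmeas : ∀ i, Measurable (c i))
    (hindep : iIndepFun c μ)
    (p : Fin K → ℝ)
    (hplaw : ∀ i l, (μ {ω | c i ω = l}).toReal = p l)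
    (p2 : ℝ) (hp2 : p2 = ∑ l, (p l) ^ 2)
    (Q : Ω → ℝ)
    (hQ : ∀ ω, Q ω = (1 / (2 * m)) * ∑ i, ∑ j,
        (A i j - k i * k j / (2 * m)) * (if c i ω = c j ω then (1 : ℝ) else 0)) :
    ∫ ω, Q ω ∂μ = -((1 - p2) / (4 * m ^ 2)) * ∑ i, (k i) ^ 2 :=
  stmt13_general A hAdiag k hk m hm h2m c hmeas hindep p hplaw p2 hp2 Q hQ
end

section
/- With the notation of the modularity model, writing B_{ij} = A_{ij} − kᵢkⱼ/(2m) and h̄(a,b) = δ_{a,b} − p_a − p_b + p_{(2)}, the modularity satisfies the decomposition Qₙ = (1−p_{(2)})/(2m) ∑ᵢ B_{ii} + (1/m) ∑_{i<j} B_{ij} h̄(cᵢ,cⱼ) − (1/m) ∑ᵢ B_{ii}(p_{cᵢ} − p_{(2)}). -/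
lemma sum_split_aux {n : ℕ} (f : Fin n → Fin n → ℝ) (hf : ∀ i j, f i j = f j i) :
    ∑ i, ∑ j, f i j
      = (∑ i, f i i) + 2 * ∑ j, ∑ i, (if i < j then f i j else 0) := by
  have hpt : ∀ i j : Fin n, f i j =
      (if i < j then f i j else 0) + (if i = j then f i j else 0)
        + (if j < i then f i j else 0) := by
    intro i j
    rcases lt_trichotomy i j with h | h | h
    · simp [h, ne_of_lt h, asymm h]
    · simp [h, lt_irrefl]
    · simp [h, (ne_of_lt h).symm, asymm h, not_lt_of_gt h]
  calc ∑ i, ∑ j, f i j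
      = ∑ i, ∑ j, ((if i < j then f i j else 0) + (if i = j then f i j else 0)
          + (if j < i then f i j else 0)) := by
        refine Finset.sum_congr rfl fun i _ => Finset.sum_congr rfl fun j _ => hpt i j
    _ = (∑ i, ∑ j, (if i < j then f i j else 0)) + (∑ i, ∑ j, (if i = j then f i j else 0))
          + ∑ i, ∑ j, (if j < i then f i j else 0) := by
        simp [Finset.sum_add_distrib]
    _ = (∑ i, f i i) + 2 * ∑ j, ∑ i, (if i < j then f i j else 0) := by
        have h1 : ∑ i, ∑ j, (if i < j then f i j else 0)
            = ∑ j, ∑ i, (if i < j then f i j else 0) := Finset.sum_comm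
        have h2 : (∑ i, ∑ j, (if i = j then f i j else 0)) = ∑ i, f i i := by
          simp
        have h3 : ∑ i, ∑ j, (if j < i then f i j else 0)
            = ∑ j, ∑ i, (if i < j then f i j else 0) := by
          refine Finset.sum_congr rfl fun i _ => Finset.sum_congr rfl fun j _ => ?_
          rw [hf]
        rw [h1, h2, h3]; ring

/-- Deterministic decomposition of modularity:
`Qₙ = (1−p₂)/(2m) ∑ᵢ Bᵢᵢ + (1/m) ∑_{i<j} B_{ij} h̄(cᵢ,cⱼ) − (1/m) ∑ᵢ Bᵢᵢ (p_{cᵢ} − p₂)`. -/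
theorem stmt14
    {n K : ℕ} (A : Fin n → Fin n → ℝ)
    (hA01 : ∀ i j, i ≠ j → A i j = 0 ∨ A i j = 1)
    (hAdiag : ∀ i, A i i = 0)
    (hAsymm : ∀ i j, A i j = A j i)
    (k : Fin n → ℝ) (hk : ∀ i, k i = ∑ j, A i j)
    (m : ℝ) (hm : 0 < m) (h2m : ∑ i, k i = 2 * m)
    (B : Fin n → Fin n → ℝ)
    (hB : ∀ i j, B i j = A i j - k i * k j / (2 * m))
    (p : Fin K → ℝ) (hp0 : ∀ l, 0 ≤ p l) (hp1 : ∑ l, p l = 1)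
    (p2 : ℝ) (hp2 : p2 = ∑ l, (p l) ^ 2)
    (hbar : Fin K → Fin K → ℝ)
    (hhbar : ∀ a b, hbar a b = (if a = b then (1 : ℝ) else 0) - p a - p b + p2)
    (c : Fin n → Fin K) (Q : ℝ)
    (hQ : Q = (1 / (2 * m)) * ∑ i, ∑ j,
        B i j * (if c i = c j then (1 : ℝ) else 0)) :
    Q = (1 - p2) / (2 * m) * (∑ i, B i i)
        + (1 / m) * (∑ j, ∑ i, if i < j then B i j * hbar (c i) (c j) else 0)
        - (1 / m) * ∑ i, B i i * (p (c i) - p2) := by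
  have hm0 : m ≠ 0 := ne_of_gt hm
  have hBsymm : ∀ i j, B i j = B j i := by
    intro i j; rw [hB, hB, hAsymm]; ring
  have hrow : ∀ i, ∑ j, B i j = 0 := by
    intro i
    simp only [hB]
    rw [Finset.sum_sub_distrib]
    have h1 : ∑ j, A i j = k i := (hk i).symm
    have h2 : ∑ j, k i * k j / (2 * m) = k i := by
      rw [← Finset.sum_div, ← Finset.mul_sum, h2m]
      field_simp
    rw [h1, h2, sub_self]
  have hcol : ∀ j, ∑ i, B i j = 0 := by
    intro j
    rw [Finset.sum_congr rfl (fun i _ => hBsymm i j)]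
    exact hrow j
  -- reduce Q to the hbar sum
  have hdelta : ∀ i j : Fin n, (if c i = c j then (1 : ℝ) else 0)
      = hbar (c i) (c j) + p (c i) + p (c j) - p2 := by
    intro i j; rw [hhbar]; ring
  have key : ∑ i, ∑ j, B i j * (if c i = c j then (1 : ℝ) else 0)
      = ∑ i, ∑ j, B i j * hbar (c i) (c j) := by
    have expand : ∑ i, ∑ j, B i j * (if c i = c j then (1 : ℝ) else 0)
        = (∑ i, ∑ j, B i j * hbar (c i) (c j))
          + (∑ i, ∑ j, B i j * p (c i))
          + (∑ i, ∑ j, B i j * p (c j))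
          - (∑ i, ∑ j, B i j * p2) := by
      simp only [← Finset.sum_add_distrib, ← Finset.sum_sub_distrib]
      refine Finset.sum_congr rfl fun i _ => Finset.sum_congr rfl fun j _ => ?_
      rw [hdelta]; ring
    have t1 : (∑ i, ∑ j, B i j * p (c i)) = 0 := by
      refine Finset.sum_eq_zero fun i _ => ?_
      rw [← Finset.sum_mul, hrow, zero_mul]
    have t2 : (∑ i, ∑ j, B i j * p (c j)) = 0 := by
      rw [Finset.sum_comm]
      refine Finset.sum_eq_zero fun j _ => ?_
      rw [← Finset.sum_mul, hcol, zero_mul]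
    have t3 : (∑ i, ∑ j, B i j * p2) = 0 := by
      refine Finset.sum_eq_zero fun i _ => ?_
      rw [← Finset.sum_mul, hrow, zero_mul]
    rw [expand, t1, t2, t3]; ring
  have hbarsymm : ∀ i j : Fin n,
      B i j * hbar (c i) (c j) = B j i * hbar (c j) (c i) := by
    intro i j
    rw [hBsymm, hhbar, hhbar]
    have : (if c i = c j then (1:ℝ) else 0) = (if c j = c i then (1:ℝ) else 0) := by
      simp [eq_comm]
    rw [this]; ring
  have split := sum_split_aux (fun i j => B i j * hbar (c i) (c j)) hbarsymm
  have hdiag : ∑ i, B i i * hbar (c i) (c i)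
      = (1 - p2) * (∑ i, B i i) - 2 * ∑ i, B i i * (p (c i) - p2) := by
    rw [Finset.mul_sum, Finset.mul_sum, ← Finset.sum_sub_distrib]
    refine Finset.sum_congr rfl fun i _ => ?_
    rw [hhbar]; simp; ring
  rw [hQ, key, split, hdiag]
  field_simp
  ring
end
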